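/- arXiv:math/0112147 — 4 statements merged into one kernel-verified Lean document; each statement's English description precedes it below -/
import Mathlib

section
/- For every integer n there exists a digit sequence c in base 10 with digit set {−5, −4, …, 4} whose value is n; that is, there exist a natural number N and c : ℕ → ℤ with −5 ≤ c i ≤ 4 for all i, c i = 0 for all i ≥ N, and n = Σ_{i < N} c i · 10^i. -/
lemma exists_rep_N54_aux : ∀ (m : ℕ) (n : ℤ), n.natAbs ≤ m →
    ∃ (N : ℕ) (c : ℕ → ℤ), (∀ i, -5 ≤ c i ∧ c i ≤ 4) ∧
      (∀ i, N ≤ i → c i = 0) ∧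
      n = ∑ i ∈ Finset.range N, c i * 10 ^ i := by
  intro m
  induction m with
  | zero =>
    intro n hn
    have : n = 0 := by omega
    exact ⟨0, fun _ => 0, fun i => by norm_num, fun i _ => rfl, by simp [this]⟩
  | succ m ih =>
    intro n hn
    by_cases h0 : n = 0
    · exact ⟨0, fun _ => 0, fun i => by norm_num, fun i _ => rfl, by simp [h0]⟩
    · set d : ℤ := (n + 5) % 10 - 5 with hd
      have h10 : (0:ℤ) < 10 := by norm_num
      have hmod : 0 ≤ (n + 5) % 10 ∧ (n + 5) % 10 < 10 :=
        ⟨Int.emod_nonneg _ (by norm_num), Int.emod_lt_of_pos _ h10⟩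
      have hdvd : (10:ℤ) ∣ (n - d) := by
        have : (n + 5) % 10 = (n + 5) - 10 * ((n + 5) / 10) := by
          rw [Int.emod_def]
        omega
      obtain ⟨q, hq⟩ := hdvd
      have hnq : n = 10 * q + d := by omega
      have habs : q.natAbs ≤ m := by
        have h1 : 1 ≤ n.natAbs := by omega
        omega
      obtain ⟨N, c, hc1, hc2, hc3⟩ := ih q habs
      refine ⟨N + 1, fun i => if i = 0 then d else c (i - 1), ?_, ?_, ?_⟩
      · intro i
        by_cases hi : i = 0 <;> simp [hi]
        · omega
        · exact hc1 _
      · intro i hi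
        have : i ≠ 0 := by omega
        simp [this]
        exact hc2 _ (by omega)
      · rw [Finset.sum_range_succ']
        simp only [if_pos rfl]
        have : ∀ i ∈ Finset.range N,
            (if i + 1 = 0 then d else c (i + 1 - 1)) * 10 ^ (i + 1)
              = (c i * 10 ^ i) * 10 := by
          intro i _
          simp [pow_succ]; ring
        rw [Finset.sum_congr rfl this, ← Finset.sum_mul, ← hc3]
        push_cast
        omega

/-- Every integer is the value of a digit sequence in base 10 with digit set
{−5, …, 4} (the system N_{(5,4)}). -/
theorem exists_rep_N54 (n : ℤ) :
    ∃ (N : ℕ) (c : ℕ → ℤ), (∀ i, -5 ≤ c i ∧ c i ≤ 4) ∧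
      (∀ i, N ≤ i → c i = 0) ∧
      n = ∑ i ∈ Finset.range N, c i * 10 ^ i := by
  exact exists_rep_N54_aux n.natAbs n le_rfl
end

section
/- Representations in the system N_{(5,4)} are unique: if c, d : ℕ → ℤ are both eventually zero, satisfy −5 ≤ c i ≤ 4 and −5 ≤ d i ≤ 4 for all i, and Σ_i c i · 10^i = Σ_i d i · 10^i, then c = d. -/
lemma aux_N54 : ∀ N : ℕ, ∀ e : ℕ → ℤ, (∀ i, -9 ≤ e i ∧ e i ≤ 9) →
    (∀ i, N ≤ i → e i = 0) → (∑ i ∈ Finset.range N, e i * 10 ^ i) = 0 →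
    ∀ i, e i = 0 := by
  intro N
  induction N with
  | zero => intro e _ h0 _ i; exact h0 i (Nat.zero_le i)
  | succ n ih =>
    intro e hb h0 hs
    rw [Finset.sum_range_succ'] at hs
    have hsum : 10 * (∑ i ∈ Finset.range n, e (i + 1) * 10 ^ i) + e 0 = 0 := by
      rw [Finset.mul_sum]
      rw [show (∑ i ∈ Finset.range n, 10 * (e (i + 1) * 10 ^ i))
          = ∑ i ∈ Finset.range n, e (i + 1) * 10 ^ (i + 1) by
        apply Finset.sum_congr rfl; intro i _; ring]
      simpa using hs
    have h10 : (10:ℤ) ∣ e 0 := ⟨-∑ i ∈ Finset.range n, e (i + 1) * 10 ^ i, by linarith⟩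
    have he0 : e 0 = 0 := by
      obtain ⟨hb1, hb2⟩ := hb 0; omega
    have htail : (∑ i ∈ Finset.range n, e (i + 1) * 10 ^ i) = 0 := by linarith
    have hrec := ih (fun i => e (i + 1)) (fun i => hb (i + 1))
      (fun i hi => h0 (i + 1) (by omega)) htail
    intro i
    cases i with
    | zero => exact he0
    | succ k => exact hrec k

/-- Representations in the system N_{(5,4)} (base 10, digits −5..4) are
unique. -/
theorem unique_rep_N54 (c d : ℕ → ℤ)
    (hc0 : ∃ N, ∀ i, N ≤ i → c i = 0) (hd0 : ∃ N, ∀ i, N ≤ i → d i = 0)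
    (hc : ∀ i, -5 ≤ c i ∧ c i ≤ 4) (hd : ∀ i, -5 ≤ d i ∧ d i ≤ 4)
    (h : ∑ᶠ i, c i * 10 ^ i = ∑ᶠ i, d i * 10 ^ i) :
    c = d := by
  obtain ⟨Nc, hNc⟩ := hc0
  obtain ⟨Nd, hNd⟩ := hd0
  set N := max Nc Nd with hN
  have hcsum : ∑ᶠ i, c i * 10 ^ i = ∑ i ∈ Finset.range N, c i * 10 ^ i := by
    apply finsum_eq_finset_sum_of_support_subset
    intro i hi
    simp only [Function.mem_support] at hi
    simp only [Finset.coe_range, Set.mem_Iio]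
    by_contra hle
    exact hi (by rw [hNc i (by omega)]; ring)
  have hdsum : ∑ᶠ i, d i * 10 ^ i = ∑ i ∈ Finset.range N, d i * 10 ^ i := by
    apply finsum_eq_finset_sum_of_support_subset
    intro i hi
    simp only [Function.mem_support] at hi
    simp only [Finset.coe_range, Set.mem_Iio]
    by_contra hle
    exact hi (by rw [hNd i (by omega)]; ring)
  have hzero : (∑ i ∈ Finset.range N, (c i - d i) * 10 ^ i) = 0 := by
    have : (∑ i ∈ Finset.range N, (c i - d i) * 10 ^ i)
        = (∑ i ∈ Finset.range N, c i * 10 ^ i) - ∑ i ∈ Finset.range N, d i * 10 ^ i := by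
      rw [← Finset.sum_sub_distrib]; apply Finset.sum_congr rfl; intro i _; ring
    rw [this, ← hcsum, ← hdsum, h, sub_self]
  have hb : ∀ i, -9 ≤ c i - d i ∧ c i - d i ≤ 9 := fun i => by
    obtain ⟨h1, h2⟩ := hc i; obtain ⟨h3, h4⟩ := hd i; omega
  have hz : ∀ i, N ≤ i → c i - d i = 0 := fun i hi => by
    rw [hNc i (le_trans (le_max_left _ _) hi), hNd i (le_trans (le_max_right _ _) hi)]
    ring
  have key := aux_N54 N (fun i => c i - d i) hb hz hzero
  funext i
  have := key i
  omega
end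

section
/- Let b ≥ 3 be a natural number and let a be a natural number with 1 ≤ a ≤ b − 2. Then the system N_{(a, b−1−a)} represents every integer: for every integer n there exist a natural number N and c : ℕ → ℤ with −a ≤ c i ≤ b − 1 − a for all i, c i = 0 for all i ≥ N, and n = Σ_{i < N} c i · b^i. -/
lemma exists_rep_aux (b a : ℕ) (hb : 3 ≤ b) (ha1 : 1 ≤ a) (ha2 : a ≤ b - 2) :
    ∀ k : ℕ, ∀ n : ℤ, n.natAbs ≤ k →
    ∃ (N : ℕ) (c : ℕ → ℤ), (∀ i, -(a : ℤ) ≤ c i ∧ c i ≤ (b : ℤ) - 1 - a) ∧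
      (∀ i, N ≤ i → c i = 0) ∧
      n = ∑ i ∈ Finset.range N, c i * (b : ℤ) ^ i := by
  have hab : (a : ℤ) + 2 ≤ (b : ℤ) := by
    have : a + 2 ≤ b := by omega
    exact_mod_cast this
  have ha1' : (1 : ℤ) ≤ a := by exact_mod_cast ha1
  intro k
  induction k with
  | zero =>
    intro n hn
    have hn0 : n = 0 := by omega
    refine ⟨0, fun _ => 0, fun i => by constructor <;> simp <;> linarith,
      fun i _ => rfl, by simp [hn0]⟩
  | succ k ih =>
    intro n hn
    by_cases h0 : n.natAbs ≤ k
    · exact ih n h0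
    have hne : n ≠ 0 := by
      intro h; simp [h] at h0
    set r : ℤ := n % b with hr
    have hr0 : 0 ≤ r := Int.emod_nonneg n (by positivity)
    have hrb : r < b := Int.emod_lt_of_pos n (by positivity)
    have hdiv : n = b * (n / b) + r := (Int.mul_ediv_add_emod n b).symm
    obtain ⟨d, m, hd1, hd2, hnm⟩ :
        ∃ d m : ℤ, -(a : ℤ) ≤ d ∧ d ≤ (b : ℤ) - 1 - a ∧ n = d + b * m := by
      by_cases hc : r ≤ (b : ℤ) - 1 - a
      · exact ⟨r, n / b, by omega, hc, by omega⟩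
      · exact ⟨r - b, n / b + 1, by omega, by omega, by ring_nf; omega⟩
    -- bound on m
    have hmlt : m.natAbs < n.natAbs := by
      have h1 : (b : ℤ) * |m| = |n - d| := by
        have : n - d = (b : ℤ) * m := by rw [hnm]; ring
        rw [this, abs_mul, abs_of_nonneg (by positivity : (0:ℤ) ≤ (b:ℤ))]
      have h2 : |n - d| ≤ |n| + |d| := abs_sub n d
      have h3 : |d| ≤ (b : ℤ) - 2 := abs_le.mpr ⟨by omega, by omega⟩
      have h4 : 1 ≤ |n| := by
        rcases abs_pos.mpr hne with h; omega
      by_contra hcon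
      push_neg at hcon
      have h5 : |n| ≤ |m| := by
        rw [Int.abs_eq_natAbs, Int.abs_eq_natAbs]
        exact_mod_cast hcon
      have hb3 : (3 : ℤ) ≤ b := by exact_mod_cast hb
      nlinarith [abs_nonneg m]
    obtain ⟨N, c, hc1, hc2, hc3⟩ := ih m (by omega)
    refine ⟨N + 1, fun i => if i = 0 then d else c (i - 1), ?_, ?_, ?_⟩
    · intro i
      by_cases hi : i = 0 <;> simp [hi]
      · exact ⟨hd1, hd2⟩
      · exact hc1 (i - 1)
    · intro i hi
      have : i ≠ 0 := by omega
      simp [this]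
      exact hc2 (i - 1) (by omega)
    · rw [Finset.sum_range_succ']
      simp only [Nat.add_sub_cancel]
      have : ∀ i ∈ Finset.range N,
          (if i + 1 = 0 then d else c i) * (b : ℤ) ^ (i + 1)
            = (c i * (b : ℤ) ^ i) * b := by
        intro i _; simp [pow_succ]; ring
      rw [Finset.sum_congr rfl this, ← Finset.sum_mul, ← hc3]
      simp [hnm]; ring

/-- For b ≥ 3 and 1 ≤ a ≤ b − 2, the system N_{(a, b−1−a)} (base b, digit set
{−a, …, b−1−a}) represents every integer. -/
theorem exists_rep_directed (b a : ℕ) (hb : 3 ≤ b) (ha1 : 1 ≤ a)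
    (ha2 : a ≤ b - 2) (n : ℤ) :
    ∃ (N : ℕ) (c : ℕ → ℤ), (∀ i, -(a : ℤ) ≤ c i ∧ c i ≤ (b : ℤ) - 1 - a) ∧
      (∀ i, N ≤ i → c i = 0) ∧
      n = ∑ i ∈ Finset.range N, c i * (b : ℤ) ^ i := by
  exact exists_rep_aux b a hb ha1 ha2 n.natAbs n le_rfl
end

section
/- Truncation in the asymmetric system N_{(5,4)} can fail to give a nearest multiple of 100: there exists an eventually zero c : ℕ → ℤ with −5 ≤ c i ≤ 4 for all i such that, setting n = Σ_i c i · 10^i and m = Σ_{i ≥ 2} c i · 10^i, one has |n − m| > 50; in particular m is not a nearest multiple of 100 to n. (A witness is n = 145 with digits c 0 = −5, c 1 = −5, c 2 = 2, for which m = 200 while the nearest multiple of 100 is 100.) -/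
/-! Truncation drops the digits `c 0` and `c 1`, so `n - m = c 0 + 10 * c 1`. The digit set is
asymmetric, and the lowest digit `-5` taken twice makes this error `-55`, beyond the `50` allowed
for a nearest multiple of `100`: the digits `-5, -5, 2` give `n = 145`, truncated to `m = 200`. -/

open Finset

theorem finsum_eq_sum_range_of_eq_zero {M : Type*} [AddCommMonoid M] {f : ℕ → M} {N : ℕ}
    (hf : ∀ i, N ≤ i → f i = 0) : ∑ᶠ i, f i = ∑ i ∈ range N, f i := by
  refine finsum_eq_finsetSum_of_support_subset f fun i hi => ?_
  by_contra hiN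
  exact hi (hf i (by simpa using hiN))

theorem finsum_digits_sub_truncation {R : Type*} [CommRing R] {c : ℕ → R} {N : ℕ}
    (hc : ∀ i, N ≤ i → c i = 0) (b : R) (k : ℕ) :
    (∑ᶠ i, c i * b ^ i) - ∑ᶠ i, c (i + k) * b ^ (i + k) = ∑ i ∈ range k, c i * b ^ i := by
  rw [finsum_eq_sum_range_of_eq_zero (N := k + N) fun i hi => by simp [hc i (by omega)],
    finsum_eq_sum_range_of_eq_zero (N := N) fun i hi => by simp [hc (i + k) (by omega)],
    sum_range_add]
  simp only [add_comm k, add_sub_cancel_right]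

/-- Truncation in the asymmetric system N_{(5,4)} can fail to give a nearest
multiple of 100: for some digit sequence, the truncated value m satisfies
|n − m| > 50. -/
theorem truncation_fails_N54 :
    ∃ c : ℕ → ℤ, (∃ N, ∀ i, N ≤ i → c i = 0) ∧
      (∀ i, -5 ≤ c i ∧ c i ≤ 4) ∧
      |(∑ᶠ i, c i * 10 ^ i) - ∑ᶠ i, c (i + 2) * 10 ^ (i + 2)| > 50 := by
  have hc : ∀ i, 3 ≤ i → [-5, -5, 2].getD i 0 = 0 := fun i hi => List.getD_eq_default _ _ hi
  refine ⟨fun i => [-5, -5, 2].getD i 0, ⟨3, hc⟩, fun i => ?_, ?_⟩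
  · rcases i with _ | _ | _ | i <;> simp
  · rw [finsum_digits_sub_truncation hc]
    decide
end
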